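/- For every p ≥ 1 and every i ≥ 1, the infimum over all couplings π of μ and ν_i of ∫_{ℝ^d × ℝ^d} |x − y|^p dπ(x, y) equals 2 σ_i r_i^p, and it is attained by the coupling induced by the map fixing B_j^+ and B_j^- for every j ≠ i and sending B_i^+ to C_i^+ and B_i^- to C_i^-. -/

import Mathlib

open MeasureTheory Metric
open scoped ENNReal

private lemma euclid_coord_le_dist {d : ℕ} (x y : EuclideanSpace ℝ (Fin d)) (k : Fin d) :
    |x k - y k| ≤ dist x y := by
  rw [EuclideanSpace.dist_eq, ← Real.sqrt_sq_eq_abs]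
  apply Real.sqrt_le_sqrt
  have := Finset.single_le_sum (f := fun j => dist (x j) (y j) ^ 2)
    (fun j _ => sq_nonneg _) (Finset.mem_univ k)
  simpa [Real.dist_eq, sq_abs] using this

private lemma euclid_dist_of_eq {d : ℕ} (x y : EuclideanSpace ℝ (Fin d)) (k : Fin d)
    (h : ∀ j, j ≠ k → x j = y j) : dist x y = |x k - y k| := by
  rw [EuclideanSpace.dist_eq,
    Finset.sum_eq_single k (fun j _ hj => by simp [Real.dist_eq, h j hj]) (by simp),
    Real.dist_eq, Real.sqrt_sq_eq_abs, abs_abs]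

private lemma fst_smul' {α β : Type*} [MeasurableSpace α] [MeasurableSpace β]
    (c : ℝ≥0∞) (ρ : Measure (α × β)) : (c • ρ).fst = c • ρ.fst := by
  ext s hs; simp [Measure.fst_apply hs]

private lemma fst_dirac' {α β : Type*} [MeasurableSpace α] [MeasurableSpace β] (z : α × β) :
    (Measure.dirac z).fst = Measure.dirac z.1 := by
  rw [Measure.fst, Measure.map_dirac' measurable_fst]

private lemma snd_smul' {α β : Type*} [MeasurableSpace α] [MeasurableSpace β]
    (c : ℝ≥0∞) (ρ : Measure (α × β)) : (c • ρ).snd = c • ρ.snd := by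
  ext s hs; simp [Measure.snd_apply hs]

private lemma snd_dirac' {α β : Type*} [MeasurableSpace α] [MeasurableSpace β] (z : α × β) :
    (Measure.dirac z).snd = Measure.dirac z.2 := by
  rw [Measure.snd, Measure.map_dirac' measurable_snd]

/-- For every `p ≥ 1` and every `i`, the infimum over all couplings `π` of `μ` and `ν_i`
of `∫ |x - y|^p dπ` equals `2 σ_i r_i^p`, attained by the coupling induced by the map
fixing `B_j^±` for `j ≠ i` and sending `B_i^+` to `C_i^+` and `B_i^-` to `C_i^-`. -/
theorem stmt16 (d : ℕ) (hd : 2 ≤ d)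
    (ℓ r w u : ℕ → ℝ)
    (hℓ : ∀ i, 0 < ℓ i) (hr : ∀ i, 0 < r i) (hw : ∀ i, 0 < w i)
    (hsep : ∀ i, 100 * max (ℓ i) (max (r i) (w i)) ≤ u (i + 1) - u i)
    (hsep' : ∀ i, 100 * max (ℓ (i + 1)) (max (r (i + 1)) (w (i + 1))) ≤ u (i + 1) - u i)
    (hwr : ∀ i, 100 * r i ≤ w i)
    (σ : ℕ → ℝ) (hσpos : ∀ i, 0 < σ i) (hσsum : ∑' i, 2 * σ i = 1)
    (Bp Bm Cp Cm : ℕ → EuclideanSpace ℝ (Fin d))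
    (hBp : ∀ i, Bp i = EuclideanSpace.single (⟨0, by omega⟩ : Fin d) (u i) +
      EuclideanSpace.single (⟨1, by omega⟩ : Fin d) (w i))
    (hBm : ∀ i, Bm i = EuclideanSpace.single (⟨0, by omega⟩ : Fin d) (u i) -
      EuclideanSpace.single (⟨1, by omega⟩ : Fin d) (w i))
    (hCp : ∀ i, Cp i = EuclideanSpace.single (⟨0, by omega⟩ : Fin d) (u i + r i) +
      EuclideanSpace.single (⟨1, by omega⟩ : Fin d) (w i))
    (hCm : ∀ i, Cm i = EuclideanSpace.single (⟨0, by omega⟩ : Fin d) (u i - r i) -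
      EuclideanSpace.single (⟨1, by omega⟩ : Fin d) (w i))
    (μ : Measure (EuclideanSpace ℝ (Fin d)))
    (hμ : μ = Measure.sum fun j => ENNReal.ofReal (σ j) •
      (Measure.dirac (Bp j) + Measure.dirac (Bm j)))
    (ν : ℕ → Measure (EuclideanSpace ℝ (Fin d)))
    (hν : ∀ i, ν i = Measure.sum fun j => ENNReal.ofReal (σ j) •
      (Measure.dirac (if j = i then Cp j else Bp j) +
        Measure.dirac (if j = i then Cm j else Bm j)))
    (p : ℝ) (hp : 1 ≤ p) (i : ℕ)
    (π₀ : Measure (EuclideanSpace ℝ (Fin d) × EuclideanSpace ℝ (Fin d)))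
    (hπ₀ : π₀ = Measure.sum fun j => ENNReal.ofReal (σ j) •
      (Measure.dirac (Bp j, if j = i then Cp j else Bp j) +
        Measure.dirac (Bm j, if j = i then Cm j else Bm j))) :
    π₀.fst = μ ∧ π₀.snd = ν i ∧
    ∫⁻ z, ENNReal.ofReal (dist z.1 z.2 ^ p) ∂π₀ =
      ENNReal.ofReal (2 * σ i * r i ^ p) ∧
    ∀ π' : Measure (EuclideanSpace ℝ (Fin d) × EuclideanSpace ℝ (Fin d)),
      IsProbabilityMeasure π' → π'.fst = μ → π'.snd = ν i →
      ENNReal.ofReal (2 * σ i * r i ^ p) ≤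
        ∫⁻ z, ENNReal.ofReal (dist z.1 z.2 ^ p) ∂π' := by
  set z0 : Fin d := ⟨0, by omega⟩ with hz0
  set z1 : Fin d := ⟨1, by omega⟩ with hz1
  have hfmeas : Measurable fun z : EuclideanSpace ℝ (Fin d) × EuclideanSpace ℝ (Fin d) =>
      ENNReal.ofReal (dist z.1 z.2 ^ p) := by fun_prop
  -- coordinates
  have hBp0 : ∀ j, (Bp j) z0 = u j := fun j => by
    simp [hBp j, z0, z1, EuclideanSpace.single_apply, Fin.ext_iff]
  have hBm0 : ∀ j, (Bm j) z0 = u j := fun j => by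
    simp [hBm j, z0, z1, EuclideanSpace.single_apply, Fin.ext_iff]
  have hCp0 : (Cp i) z0 = u i + r i := by
    simp [hCp i, z0, z1, EuclideanSpace.single_apply, Fin.ext_iff]
  have hCm0 : (Cm i) z0 = u i - r i := by
    simp [hCm i, z0, z1, EuclideanSpace.single_apply, Fin.ext_iff]
  have hdBpCp : dist (Bp i) (Cp i) = r i := by
    rw [euclid_dist_of_eq (Bp i) (Cp i) z0 (fun j hj => by
      simp [hBp i, hCp i, EuclideanSpace.single_apply, hj]), hBp0, hCp0,
      show u i - (u i + r i) = -(r i) by ring, abs_neg, abs_of_pos (hr i)]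
  have hdBmCm : dist (Bm i) (Cm i) = r i := by
    rw [euclid_dist_of_eq (Bm i) (Cm i) z0 (fun j hj => by
      simp [hBm i, hCm i, EuclideanSpace.single_apply, hj]), hBm0, hCm0,
      show u i - (u i - r i) = r i by ring, abs_of_pos (hr i)]
  refine ⟨?_, ?_, ?_, ?_⟩
  · rw [hπ₀, hμ, Measure.fst_sum]
    exact congrArg Measure.sum (funext fun j => by
      rw [fst_smul', Measure.fst_add, fst_dirac', fst_dirac'])
  · rw [hπ₀, hν i, Measure.snd_sum]
    exact congrArg Measure.sum (funext fun j => by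
      rw [snd_smul', Measure.snd_add, snd_dirac', snd_dirac'])
  · rw [hπ₀, lintegral_sum_measure]
    simp_rw [lintegral_smul_measure, lintegral_add_measure, lintegral_dirac' _ hfmeas]
    rw [tsum_eq_single i (fun j hj => by
      simp [if_neg hj, Real.zero_rpow (by linarith : p ≠ 0)])]
    simp only [eq_self_iff_true, if_true]
    rw [hdBpCp, hdBmCm,
      ← ENNReal.ofReal_add (Real.rpow_nonneg (hr i).le p) (Real.rpow_nonneg (hr i).le p),
      smul_eq_mul, ← ENNReal.ofReal_mul (hσpos i).le]
    congr 1; ring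
  · intro π' _ hfst' hsnd'
    set A : Set (EuclideanSpace ℝ (Fin d)) := Set.range Bp ∪ Set.range Bm with hA
    have hAm : MeasurableSet A :=
      ((Set.countable_range _).union (Set.countable_range _)).measurableSet
    set S : Set (EuclideanSpace ℝ (Fin d)) := {Cp i, Cm i} with hS
    have hSm : MeasurableSet S :=
      (Set.toFinite S).measurableSet
    have hμAc : μ Aᶜ = 0 := by
      rw [hμ, Measure.sum_apply _ hAm.compl]
      refine ENNReal.tsum_eq_zero.mpr fun j => ?_
      rw [Measure.smul_apply, Measure.add_apply,
        Measure.dirac_apply' _ hAm.compl, Measure.dirac_apply' _ hAm.compl,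
        Set.indicator_of_notMem (by simp [hA]), Set.indicator_of_notMem (by simp [hA])]
      simp
    -- u is strictly monotone
    have humono : StrictMono u := strictMono_nat_of_lt_succ fun n => by
      have h1 := hsep n
      have h2 : ℓ n ≤ max (ℓ n) (max (r n) (w n)) := le_max_left _ _
      have := hℓ n; linarith
    have hgap : ∀ j, j ≠ i → 100 * r i ≤ |u j - u i| := by
      intro j hj
      rcases lt_or_gt_of_ne hj with h | h
      · obtain ⟨k, rfl⟩ : ∃ k, i = k + 1 := ⟨i - 1, by omega⟩
        have h1 := hsep' k
        have h2 : r (k + 1) ≤ max (ℓ (k + 1)) (max (r (k + 1)) (w (k + 1))) :=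
          le_trans (le_max_left _ _) (le_max_right _ _)
        have h3 : u j ≤ u k := humono.monotone (by omega)
        have h4 := hr (k + 1)
        rw [abs_sub_comm, abs_of_nonneg (by linarith)]
        linarith
      · have h1 := hsep i
        have h2 : r i ≤ max (ℓ i) (max (r i) (w i)) :=
          le_trans (le_max_left _ _) (le_max_right _ _)
        have h3 : u (i + 1) ≤ u j := humono.monotone h
        have h4 := hr i
        rw [abs_of_nonneg (by linarith)]
        linarith
    have hkey : ∀ x ∈ A, ∀ y ∈ S, r i ≤ dist x y := by
      intro x hx y hy
      obtain ⟨j, hxj⟩ : ∃ j, x z0 = u j := by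
        rcases hx with ⟨j, rfl⟩ | ⟨j, rfl⟩
        exacts [⟨j, hBp0 j⟩, ⟨j, hBm0 j⟩]
      have hy0 : y z0 = u i + r i ∨ y z0 = u i - r i := by
        rcases hy with rfl | rfl
        exacts [Or.inl hCp0, Or.inr hCm0]
      refine le_trans ?_ (euclid_coord_le_dist x y z0)
      rw [hxj]
      rcases eq_or_ne j i with rfl | hj
      · rcases hy0 with hy0 | hy0 <;> rw [hy0]
        · rw [show u j - (u j + r j) = -(r j) by ring, abs_neg, abs_of_pos (hr j)]
        · rw [show u j - (u j - r j) = r j by ring, abs_of_pos (hr j)]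
      · have hg := hgap j hj
        rcases hy0 with hy0 | hy0 <;> rw [hy0]
        · have h1 := abs_sub_abs_le_abs_sub (u j - u i) (r i)
          rw [abs_of_pos (hr i)] at h1
          rw [show u j - (u i + r i) = u j - u i - r i by ring]
          have := hr i; linarith
        · have h1 := abs_sub_abs_le_abs_sub (u j - u i) (-(r i))
          rw [abs_neg, abs_of_pos (hr i)] at h1
          rw [show u j - (u i - r i) = u j - u i - -(r i) by ring]
          have := hr i; linarith
    have h0 : π' (Aᶜ ×ˢ Set.univ) = 0 := by
      have h1 : π'.fst Aᶜ = 0 := by rw [hfst']; exact hμAc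
      rwa [Measure.fst_apply hAm.compl, ← Set.prod_univ] at h1
    have hνS : ENNReal.ofReal (2 * σ i) ≤ ν i S := by
      rw [hν i, Measure.sum_apply _ hSm]
      refine le_trans ?_ (ENNReal.le_tsum i)
      have m1 : Cp i ∈ S := Set.mem_insert _ _
      have m2 : Cm i ∈ S := Set.mem_insert_of_mem _ rfl
      rw [Measure.smul_apply, Measure.add_apply, if_pos rfl, if_pos rfl,
        Measure.dirac_apply' _ hSm, Measure.dirac_apply' _ hSm,
        Set.indicator_of_mem m1, Set.indicator_of_mem m2]
      simp only [Pi.one_apply, smul_eq_mul]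
      rw [show ((1 : ℝ≥0∞) + 1) = ENNReal.ofReal 2 by norm_num,
        ← ENNReal.ofReal_mul (hσpos i).le]
      exact le_of_eq (by norm_num [mul_comm])
    have hπS : ENNReal.ofReal (2 * σ i) ≤ π' (A ×ˢ S) := by
      have h1 : π' (Set.univ ×ˢ S) = ν i S := by
        rw [← hsnd', Measure.snd_apply hSm, Set.univ_prod]
      calc ENNReal.ofReal (2 * σ i) ≤ ν i S := hνS
        _ = π' (Set.univ ×ˢ S) := h1.symm
        _ ≤ π' (A ×ˢ S ∪ Aᶜ ×ˢ Set.univ) := by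
            refine measure_mono fun z hz => ?_
            by_cases hz1 : z.1 ∈ A
            · exact Or.inl ⟨hz1, hz.2⟩
            · exact Or.inr ⟨hz1, trivial⟩
        _ ≤ π' (A ×ˢ S) + π' (Aᶜ ×ˢ Set.univ) := measure_union_le _ _
        _ = π' (A ×ˢ S) := by rw [h0, add_zero]
    calc ENNReal.ofReal (2 * σ i * r i ^ p)
        = ENNReal.ofReal (r i ^ p) * ENNReal.ofReal (2 * σ i) := by
          rw [← ENNReal.ofReal_mul (Real.rpow_nonneg (hr i).le p)]; congr 1; ring
      _ ≤ ENNReal.ofReal (r i ^ p) * π' (A ×ˢ S) := mul_le_mul_right hπS _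
      _ = ∫⁻ _ in A ×ˢ S, ENNReal.ofReal (r i ^ p) ∂π' := (setLIntegral_const _ _).symm
      _ ≤ ∫⁻ z in A ×ˢ S, ENNReal.ofReal (dist z.1 z.2 ^ p) ∂π' :=
          setLIntegral_mono' (hAm.prod hSm) fun z hz =>
            ENNReal.ofReal_le_ofReal
              (Real.rpow_le_rpow (hr i).le (hkey _ hz.1 _ hz.2) (by linarith))
      _ ≤ ∫⁻ z, ENNReal.ofReal (dist z.1 z.2 ^ p) ∂π' := setLIntegral_le_lintegral _ _
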